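/- Let λ be a real number with λ(3λ²-1)(λ²-3) ≠ 0 and (√3 λ + 1) ≠ 0 ≠ (1 - √3 λ). Set λ₂ = (λ - √3)/(√3 λ + 1) and λ₃ = (λ + √3)/(1 - √3 λ), and consider the 6-tuple (λ,λ,λ₂,λ₂,λ₃,λ₃). Then the elementary symmetric polynomials satisfy 15·S₀ + 3·S₂ + 3·S₄ + 15·S₆ = 24(1+λ²)³/(1-3λ²)². -/

import Mathlib

/-!
Write `λ = tan θ`; then `λ₂ = tan (θ - π/3)` and `λ₃ = tan (θ + π/3)`, and the elementary
symmetric functions of the triple `(λ, λ₂, λ₃)` are `e₂ = -3` and `e₁ = 3 tan 3θ = -3 e₃`.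
The generating polynomial of the doubled 6-tuple is the square of that of the triple, so
`S₂ = e₁² + 2e₂`, `S₄ = e₂² + 2e₁e₃`, `S₆ = e₃²`, and the combination collapses to
`24 (1 + tan² 3θ) = 24 (1 + λ²)³ / (1 - 3λ²)²`.
-/

open Finset

def esymm {R : Type*} [CommRing R] {n : ℕ} (k : ℕ) (v : Fin n → R) : R :=
  ∑ s ∈ powersetCard k (univ : Finset (Fin n)), ∏ i ∈ s, v i

theorem Multiset.esymm_cons_succ {R : Type*} [CommSemiring R] (a : R) (s : Multiset R) (k : ℕ) :
    (a ::ₘ s).esymm (k + 1) = s.esymm (k + 1) + a * s.esymm k := by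
  simp [Multiset.esymm, Multiset.map_map, Multiset.sum_map_mul_left]

section
variable {R : Type*} [CommRing R]

theorem esymm_eq_esymm_map_univ {n : ℕ} (k : ℕ) (v : Fin n → R) :
    esymm k v = (univ.val.map v).esymm k :=
  (esymm_map_val v univ k).symm

@[simp] theorem esymm_zero {n : ℕ} (v : Fin n → R) : esymm 0 v = 1 := by
  simp [esymm]

@[simp] theorem esymm_eq_zero_of_lt {n k : ℕ} (v : Fin n → R) (h : n < k) : esymm k v = 0 := by
  rw [esymm, powersetCard_eq_empty.2 (by simpa using h), sum_empty]

@[simp] theorem esymm_succ_vecCons {n : ℕ} (k : ℕ) (a : R) (v : Fin n → R) :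
    esymm (k + 1) (Matrix.vecCons a v) = esymm (k + 1) v + a * esymm k v := by
  simp only [esymm_eq_esymm_map_univ, Fin.univ_val_map, List.ofFn_succ, Matrix.cons_val_zero,
    Matrix.cons_val_succ, ← Multiset.cons_coe, Multiset.esymm_cons_succ]

theorem esymm_one_vec_three (a b c : R) : esymm 1 ![a, b, c] = a + (b + c) := by
  simp; ring

theorem esymm_two_vec_three (a b c : R) : esymm 2 ![a, b, c] = a * (b + c) + b * c := by
  simp; ring

theorem esymm_three_vec_three (a b c : R) : esymm 3 ![a, b, c] = a * (b * c) := by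
  simp

theorem esymm_two_doubled (a b c : R) :
    esymm 2 ![a, a, b, b, c, c] = esymm 1 ![a, b, c] ^ 2 + 2 * esymm 2 ![a, b, c] := by
  simp; ring

theorem esymm_four_doubled (a b c : R) :
    esymm 4 ![a, a, b, b, c, c] =
      esymm 2 ![a, b, c] ^ 2 + 2 * esymm 1 ![a, b, c] * esymm 3 ![a, b, c] := by
  simp; ring

theorem esymm_six_doubled (a b c : R) : esymm 6 ![a, a, b, b, c, c] = esymm 3 ![a, b, c] ^ 2 := by
  simp; ring

end

section
variable {K : Type*} [Field K] {s t : K}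

theorem one_sub_three_mul_sq_ne_zero (hs : s ^ 2 = 3) (hp : s * t + 1 ≠ 0) (hm : 1 - s * t ≠ 0) :
    1 - 3 * t ^ 2 ≠ 0 := by
  have : 1 - 3 * t ^ 2 = (s * t + 1) * (1 - s * t) := by linear_combination t ^ 2 * hs
  exact this ▸ mul_ne_zero hp hm

theorem one_add_sq_tan_three_mul (hq : 1 - 3 * t ^ 2 ≠ 0) :
    1 + (t * (t ^ 2 - 3) / (1 - 3 * t ^ 2)) ^ 2 = (1 + t ^ 2) ^ 3 / (1 - 3 * t ^ 2) ^ 2 := by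
  rw [div_pow, one_add_div (pow_ne_zero 2 hq)]
  ring

variable (hs : s ^ 2 = 3) (hp : s * t + 1 ≠ 0) (hm : 1 - s * t ≠ 0)
include hs hp hm

theorem tan_sub_add_tan_add :
    (t - s) / (s * t + 1) + (t + s) / (1 - s * t) = 8 * t / (1 - 3 * t ^ 2) := by
  rw [div_add_div _ _ hp hm, div_eq_div_iff (mul_ne_zero hp hm)
    (one_sub_three_mul_sq_ne_zero hs hp hm)]
  linear_combination (2 * t * (1 + t ^ 2)) * hs

theorem tan_sub_mul_tan_add :
    (t - s) / (s * t + 1) * ((t + s) / (1 - s * t)) = (t ^ 2 - 3) / (1 - 3 * t ^ 2) := by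
  rw [div_mul_div_comm, div_eq_div_iff (mul_ne_zero hp hm) (one_sub_three_mul_sq_ne_zero hs hp hm)]
  linear_combination (t ^ 4 - 1) * hs

theorem esymm_two_tan_triple :
    esymm 2 ![t, (t - s) / (s * t + 1), (t + s) / (1 - s * t)] = -3 := by
  rw [esymm_two_vec_three, tan_sub_add_tan_add hs hp hm, tan_sub_mul_tan_add hs hp hm,
    mul_div_assoc', ← add_div, div_eq_iff (one_sub_three_mul_sq_ne_zero hs hp hm)]
  ring

theorem esymm_three_tan_triple :
    esymm 3 ![t, (t - s) / (s * t + 1), (t + s) / (1 - s * t)] =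
      t * (t ^ 2 - 3) / (1 - 3 * t ^ 2) := by
  rw [esymm_three_vec_three, tan_sub_mul_tan_add hs hp hm, mul_div_assoc]

theorem esymm_one_tan_triple :
    esymm 1 ![t, (t - s) / (s * t + 1), (t + s) / (1 - s * t)] =
      -3 * esymm 3 ![t, (t - s) / (s * t + 1), (t + s) / (1 - s * t)] := by
  have hq := one_sub_three_mul_sq_ne_zero hs hp hm
  rw [esymm_one_vec_three, tan_sub_add_tan_add hs hp hm, esymm_three_tan_triple hs hp hm,
    mul_div_assoc', add_div' _ _ _ hq, div_eq_div_iff hq hq]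
  ring

end

theorem esymm_g3_mult_two_general (lam : ℝ)
    (hd1 : Real.sqrt 3 * lam + 1 ≠ 0) (hd2 : 1 - Real.sqrt 3 * lam ≠ 0)
    (l2 l3 : ℝ) (e2 : l2 = (lam - Real.sqrt 3) / (Real.sqrt 3 * lam + 1))
    (e3 : l3 = (lam + Real.sqrt 3) / (1 - Real.sqrt 3 * lam))
    (v : Fin 6 → ℝ) (hv : v = ![lam, lam, l2, l2, l3, l3]) :
    15 * esymm 0 v + 3 * esymm 2 v + 3 * esymm 4 v + 15 * esymm 6 v =
      24 * (1 + lam ^ 2) ^ 3 / (1 - 3 * lam ^ 2) ^ 2 := by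
  have hs : Real.sqrt 3 ^ 2 = 3 := Real.sq_sqrt (by norm_num)
  subst hv e2 e3
  rw [esymm_zero, esymm_two_doubled, esymm_four_doubled, esymm_six_doubled,
    esymm_one_tan_triple hs hd1 hd2, esymm_two_tan_triple hs hd1 hd2, mul_div_assoc (24 : ℝ),
    ← one_add_sq_tan_three_mul (one_sub_three_mul_sq_ne_zero hs hd1 hd2),
    ← esymm_three_tan_triple hs hd1 hd2]
  ring

/-- Gauss–Bonnet–Chern integrand of Cartan's isoparametric hypersurface `M_{(3,2)} ⊂ S⁷`:
for the 6-tuple `(λ,λ,λ₂,λ₂,λ₃,λ₃)` with `λ₂ = (λ-√3)/(√3λ+1)`, `λ₃ = (λ+√3)/(1-√3λ)`,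
`15 S₀ + 3 S₂ + 3 S₄ + 15 S₆ = 24(1+λ²)³/(1-3λ²)²`. -/
theorem esymm_g3_mult_two (lam : ℝ)
    (h0 : lam * (3 * lam ^ 2 - 1) * (lam ^ 2 - 3) ≠ 0)
    (hd1 : Real.sqrt 3 * lam + 1 ≠ 0) (hd2 : 1 - Real.sqrt 3 * lam ≠ 0)
    (l2 l3 : ℝ) (e2 : l2 = (lam - Real.sqrt 3) / (Real.sqrt 3 * lam + 1))
    (e3 : l3 = (lam + Real.sqrt 3) / (1 - Real.sqrt 3 * lam))
    (v : Fin 6 → ℝ) (hv : v = ![lam, lam, l2, l2, l3, l3]) :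
    15 * esymm 0 v + 3 * esymm 2 v + 3 * esymm 4 v + 15 * esymm 6 v =
      24 * (1 + lam ^ 2) ^ 3 / (1 - 3 * lam ^ 2) ^ 2 :=
  esymm_g3_mult_two_general lam hd1 hd2 l2 l3 e2 e3 v hv
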